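/- Let λ > 0, μ = √(λ²+1), and define X : ℝ² → ℝ³ by X(u,v) = ( λ·u + cosh u·sin v , (1/2)·((μ − λ)·(sinh²u + cosh²u)·sin v·cos v + 2·sinh u·cos v − (μ + λ)·v) , cosh u·cos v·((μ − λ)·sinh u·sin v + 1) ). Then: (i) each coordinate function of X is harmonic on ℝ² (∂²X_k/∂u² + ∂²X_k/∂v² = 0); (ii) X is Lorentz-conformal, i.e. ⟨X_u,X_u⟩_L = ⟨X_v,X_v⟩_L and ⟨X_u,X_v⟩_L = 0 everywhere; and (iii) X(u,0) = (λ·u, sinh u, cosh u) for all u ∈ ℝ. -/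

import Mathlib

open Real

/-- Lorentzian inner product on ℝ³: ⟨p,q⟩ = p₁q₁ + p₂q₂ − p₃q₃. -/
noncomputable def lorentz (p q : ℝ × ℝ × ℝ) : ℝ :=
  p.1 * q.1 + p.2.1 * q.2.1 - p.2.2 * q.2.2

/-- First coordinate of the helicoidal helicoid over a helix of type II, case a = 1. -/
noncomputable def X1 (lam mu u v : ℝ) : ℝ :=
  lam * u + cosh u * sin v

/-- Second coordinate of the helicoidal helicoid over a helix of type II, case a = 1. -/
noncomputable def X2 (lam mu u v : ℝ) : ℝ :=
  (1/2) * ((mu - lam) * (sinh u ^ 2 + cosh u ^ 2) * sin v * cos v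
    + 2 * sinh u * cos v - (mu + lam) * v)

/-- Third coordinate of the helicoidal helicoid over a helix of type II, case a = 1. -/
noncomputable def X3 (lam mu u v : ℝ) : ℝ :=
  cosh u * cos v * ((mu - lam) * sinh u * sin v + 1)

/-- Partial derivative of X with respect to u. -/
noncomputable def Xu (lam mu u v : ℝ) : ℝ × ℝ × ℝ :=
  (deriv (fun s => X1 lam mu s v) u, deriv (fun s => X2 lam mu s v) u,
   deriv (fun s => X3 lam mu s v) u)

/-- Partial derivative of X with respect to v. -/
noncomputable def Xv (lam mu u v : ℝ) : ℝ × ℝ × ℝ :=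
  (deriv (fun t => X1 lam mu u t) v, deriv (fun t => X2 lam mu u t) v,
   deriv (fun t => X3 lam mu u t) v)


/-!
Each coordinate of `X` is the real part of an entire function `hₖ` of `z = u + i v`
(`X1ℂ`, `X2ℂ`, `X3ℂ` below), so it is harmonic. For `F = Re h` one has `F_u = Re h'` and
`F_v = Re (i h')`, hence `X_u = Re Φ` and `X_v = Re (i Φ)` with `Φ = (h₁', h₂', h₃')`, and
conformality amounts to `Φ` being a null vector of the complexified Lorentz form,
`Φ₁² + Φ₂² − Φ₃² = 0`. In terms of `w = cosh z` this is a polynomial identity in `w` which holds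
exactly because `(μ − λ)(μ + λ) = 1`.
-/

namespace Complex

variable (z : ℂ)

theorem sinh_re : (sinh z).re = Real.sinh z.re * Real.cos z.im := by
  obtain ⟨u, v, rfl⟩ : ∃ u v : ℝ, z = u + v * I := ⟨_, _, (re_add_im z).symm⟩
  simp [sinh_add, sinh_mul_I, cosh_mul_I, ← ofReal_sinh, ← ofReal_cosh, ← ofReal_sin, ← ofReal_cos]

theorem sinh_im : (sinh z).im = Real.cosh z.re * Real.sin z.im := by
  obtain ⟨u, v, rfl⟩ : ∃ u v : ℝ, z = u + v * I := ⟨_, _, (re_add_im z).symm⟩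
  simp [sinh_add, sinh_mul_I, cosh_mul_I, ← ofReal_sinh, ← ofReal_cosh, ← ofReal_sin, ← ofReal_cos]

theorem cosh_re : (cosh z).re = Real.cosh z.re * Real.cos z.im := by
  obtain ⟨u, v, rfl⟩ : ∃ u v : ℝ, z = u + v * I := ⟨_, _, (re_add_im z).symm⟩
  simp [cosh_add, sinh_mul_I, cosh_mul_I, ← ofReal_sinh, ← ofReal_cosh, ← ofReal_sin, ← ofReal_cos]

theorem cosh_im : (cosh z).im = Real.sinh z.re * Real.sin z.im := by
  obtain ⟨u, v, rfl⟩ : ∃ u v : ℝ, z = u + v * I := ⟨_, _, (re_add_im z).symm⟩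
  simp [cosh_add, sinh_mul_I, cosh_mul_I, ← ofReal_sinh, ← ofReal_cosh, ← ofReal_sin, ← ofReal_cos]

end Complex

section RealPartOfHolomorphic

open Complex

variable {h : ℂ → ℂ} {h' : ℂ} {u v : ℝ}

theorem HasDerivAt.re_comp_add_mul_I_left (hh : HasDerivAt h h' (u + v * I)) :
    HasDerivAt (fun s : ℝ => (h (s + v * I)).re) h'.re u :=
  (hh.comp_add_const (u : ℂ) (v * I)).real_of_complex

theorem HasDerivAt.re_comp_add_mul_I_right (hh : HasDerivAt h h' (u + v * I)) :
    HasDerivAt (fun t : ℝ => (h (u + t * I)).re) (I * h').re v := by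
  have hline : HasDerivAt (fun w : ℂ => (u : ℂ) + w * I) I v := by
    simpa using ((hasDerivAt_id (v : ℂ)).mul_const I).const_add (u : ℂ)
  have := (hh.comp (v : ℂ) hline).real_of_complex
  rwa [mul_comm] at this

theorem deriv_re_comp_add_mul_I_left (hh : Differentiable ℂ h) (v : ℝ) :
    deriv (fun s : ℝ => (h (s + v * I)).re) = fun s : ℝ => (deriv h (s + v * I)).re :=
  funext fun _ => (hh _).hasDerivAt.re_comp_add_mul_I_left.deriv

theorem deriv_re_comp_add_mul_I_right (hh : Differentiable ℂ h) (u : ℝ) :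
    deriv (fun t : ℝ => (h (u + t * I)).re) = fun t : ℝ => (I * deriv h (u + t * I)).re :=
  funext fun _ => (hh _).hasDerivAt.re_comp_add_mul_I_right.deriv

theorem laplacian_re_comp_eq_zero (hh : Differentiable ℂ h) (u v : ℝ) :
    deriv (deriv fun s : ℝ => (h (s + v * I)).re) u
      + deriv (deriv fun t : ℝ => (h (u + t * I)).re) v = 0 := by
  have hh'' : HasDerivAt (deriv h) (deriv (deriv h) (u + v * I)) (u + v * I) :=
    (hh.deriv _).hasDerivAt
  rw [deriv_re_comp_add_mul_I_left hh, deriv_re_comp_add_mul_I_right hh,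
    hh''.re_comp_add_mul_I_left.deriv, (hh''.const_mul I).re_comp_add_mul_I_right.deriv,
    ← mul_assoc, I_mul_I]
  simp

end RealPartOfHolomorphic

def IsLorentzNull (p q r : ℂ) : Prop :=
  p ^ 2 + q ^ 2 - r ^ 2 = 0

open Complex in
theorem IsLorentzNull.lorentz_re_eq_lorentz_re_I_mul {p q r : ℂ} (hnull : IsLorentzNull p q r) :
    lorentz (p.re, q.re, r.re) (p.re, q.re, r.re)
        = lorentz ((I * p).re, (I * q).re, (I * r).re) ((I * p).re, (I * q).re, (I * r).re) ∧
      lorentz (p.re, q.re, r.re) ((I * p).re, (I * q).re, (I * r).re) = 0 := by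
  have hre := congrArg re hnull
  have him := congrArg im hnull
  simp only [sub_re, add_re, sub_im, add_im, sq, mul_re, mul_im, zero_re, zero_im] at hre him
  simp only [lorentz, I_mul_re]
  constructor <;> linarith

section Helicoid

open Complex

variable (lam mu : ℝ)

noncomputable def X1ℂ (z : ℂ) : ℂ :=
  lam * z - I * Complex.sinh z

noncomputable def X2ℂ (z : ℂ) : ℂ :=
  Complex.sinh z + I * ((mu + lam) / 2 * z - (mu - lam) / 4 * Complex.sinh (2 * z))

noncomputable def X3ℂ (z : ℂ) : ℂ :=
  Complex.cosh z - I * ((mu - lam) / 4 * Complex.cosh (2 * z))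

theorem X1_eq_re (u v : ℝ) : X1 lam mu u v = (X1ℂ lam (u + v * I)).re := by
  simp [X1, X1ℂ, sinh_im]

theorem X2_eq_re (u v : ℝ) : X2 lam mu u v = (X2ℂ lam mu (u + v * I)).re := by
  simp [X2, X2ℂ, sinh_re, sinh_im, Real.cosh_two_mul, Real.sin_two_mul]
  ring

theorem X3_eq_re (u v : ℝ) : X3 lam mu u v = (X3ℂ lam mu (u + v * I)).re := by
  simp [X3, X3ℂ, cosh_re, cosh_im, Real.sinh_two_mul, Real.sin_two_mul]
  ring

theorem hasDerivAt_X1ℂ (z : ℂ) : HasDerivAt (X1ℂ lam) (lam - I * Complex.cosh z) z :=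
  (((hasDerivAt_id z).const_mul (lam : ℂ)).sub
    ((Complex.hasDerivAt_sinh z).const_mul I)).congr_deriv (by ring)

theorem hasDerivAt_X2ℂ (z : ℂ) :
    HasDerivAt (X2ℂ lam mu)
      (Complex.cosh z + I * ((mu + lam) / 2 - (mu - lam) / 2 * Complex.cosh (2 * z))) z :=
  have h2z := (Complex.hasDerivAt_sinh (2 * z)).comp z ((hasDerivAt_id z).const_mul 2)
  ((Complex.hasDerivAt_sinh z).add ((((hasDerivAt_id z).const_mul ((mu + lam) / 2 : ℂ)).sub
    (h2z.const_mul ((mu - lam) / 4 : ℂ))).const_mul I)).congr_deriv (by ring)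

theorem hasDerivAt_X3ℂ (z : ℂ) :
    HasDerivAt (X3ℂ lam mu) (Complex.sinh z - I * ((mu - lam) / 2 * Complex.sinh (2 * z))) z :=
  have h2z := (Complex.hasDerivAt_cosh (2 * z)).comp z ((hasDerivAt_id z).const_mul 2)
  ((Complex.hasDerivAt_cosh z).sub
    ((h2z.const_mul ((mu - lam) / 4 : ℂ)).const_mul I)).congr_deriv (by ring)

theorem isLorentzNull_deriv_Xℂ (hmu : mu ^ 2 = lam ^ 2 + 1) (z : ℂ) :
    IsLorentzNull (deriv (X1ℂ lam) z) (deriv (X2ℂ lam mu) z) (deriv (X3ℂ lam mu) z) := by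
  unfold IsLorentzNull
  rw [(hasDerivAt_X1ℂ lam z).deriv, (hasDerivAt_X2ℂ lam mu z).deriv,
    (hasDerivAt_X3ℂ lam mu z).deriv, Complex.cosh_two_mul, Complex.sinh_two_mul]
  have hmuℂ : (mu : ℂ) ^ 2 = lam ^ 2 + 1 := by exact_mod_cast hmu
  -- with `w = cosh z`, `k = μ − λ` and `sinh² z = w² − 1` the three derivatives are
  -- `λ − i w`, `w − i (μ − k w²)` and `sinh z (1 − i k w)`
  set w := Complex.cosh z
  set k : ℂ := mu - lam
  linear_combination
    (-I * k * w + I ^ 2 * (-k * ((mu + lam) / 2 - k / 2 * w ^ 2)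
        + k ^ 2 / 4 * (Complex.sinh z ^ 2 + w ^ 2 - 1)) - (1 - I * k * w) ^ 2) * Complex.sinh_sq z
      + (w ^ 2 + (mu - k * w ^ 2) ^ 2 - (w ^ 2 - 1) * k ^ 2 * w ^ 2) * I_sq + (w ^ 2 - 1) * hmuℂ

end Helicoid

theorem helicoidal_helicoid_spacelike_typeII_a_eq_one_general (lam mu : ℝ)
    (hmu : mu = Real.sqrt (lam^2 + 1)) :
    (∀ u v : ℝ,
      deriv (deriv (fun s => X1 lam mu s v)) u + deriv (deriv (fun t => X1 lam mu u t)) v = 0 ∧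
      deriv (deriv (fun s => X2 lam mu s v)) u + deriv (deriv (fun t => X2 lam mu u t)) v = 0 ∧
      deriv (deriv (fun s => X3 lam mu s v)) u + deriv (deriv (fun t => X3 lam mu u t)) v = 0) ∧
    (∀ u v : ℝ,
      lorentz (Xu lam mu u v) (Xu lam mu u v) = lorentz (Xv lam mu u v) (Xv lam mu u v) ∧
      lorentz (Xu lam mu u v) (Xv lam mu u v) = 0) ∧
    (∀ u : ℝ, (X1 lam mu u 0, X2 lam mu u 0, X3 lam mu u 0) = (lam * u, sinh u, cosh u)) := by
  have hmu_sq : mu ^ 2 = lam ^ 2 + 1 := hmu ▸ Real.sq_sqrt (by positivity)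
  have hX1 : Differentiable ℂ (X1ℂ lam) := fun z => (hasDerivAt_X1ℂ lam z).differentiableAt
  have hX2 : Differentiable ℂ (X2ℂ lam mu) := fun z => (hasDerivAt_X2ℂ lam mu z).differentiableAt
  have hX3 : Differentiable ℂ (X3ℂ lam mu) := fun z => (hasDerivAt_X3ℂ lam mu z).differentiableAt
  refine ⟨fun u v => ?_, fun u v => ?_, fun u => ?_⟩
  · simp only [X1_eq_re, X2_eq_re, X3_eq_re]
    exact ⟨laplacian_re_comp_eq_zero hX1 u v, laplacian_re_comp_eq_zero hX2 u v,
      laplacian_re_comp_eq_zero hX3 u v⟩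
  · simp only [Xu, Xv, X1_eq_re, X2_eq_re, X3_eq_re, deriv_re_comp_add_mul_I_left hX1,
      deriv_re_comp_add_mul_I_left hX2, deriv_re_comp_add_mul_I_left hX3,
      deriv_re_comp_add_mul_I_right hX1, deriv_re_comp_add_mul_I_right hX2,
      deriv_re_comp_add_mul_I_right hX3]
    exact (isLorentzNull_deriv_Xℂ lam mu hmu_sq _).lorentz_re_eq_lorentz_re_I_mul
  · simp [X1, X2, X3]

/-- The helicoidal helicoid over a helix of type II with a = 1 is harmonic,
Lorentz-conformal, and contains the helix (λu, sinh u, cosh u). -/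
theorem helicoidal_helicoid_spacelike_typeII_a_eq_one (lam mu : ℝ)
    (hlam : 0 < lam) (hmu : mu = Real.sqrt (lam^2 + 1)) :
    (∀ u v : ℝ,
      deriv (deriv (fun s => X1 lam mu s v)) u + deriv (deriv (fun t => X1 lam mu u t)) v = 0 ∧
      deriv (deriv (fun s => X2 lam mu s v)) u + deriv (deriv (fun t => X2 lam mu u t)) v = 0 ∧
      deriv (deriv (fun s => X3 lam mu s v)) u + deriv (deriv (fun t => X3 lam mu u t)) v = 0) ∧
    (∀ u v : ℝ,
      lorentz (Xu lam mu u v) (Xu lam mu u v) = lorentz (Xv lam mu u v) (Xv lam mu u v) ∧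
      lorentz (Xu lam mu u v) (Xv lam mu u v) = 0) ∧
    (∀ u : ℝ, (X1 lam mu u 0, X2 lam mu u 0, X3 lam mu u 0) = (lam * u, sinh u, cosh u)) :=
  helicoidal_helicoid_spacelike_typeII_a_eq_one_general lam mu hmu
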